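/- Let 𝒩 be a nonempty set, k a commutative ring, and M a symmetral k-valued mould. Define the mould M̃ by M̃^∅ = 1 and M̃^{n₁⋯n_r} = (−1)^r M^{n_r⋯n₁} (sign times the value on the reversed word). Then M × M̃ = M̃ × M = 𝟙; that is, M̃ is the multiplicative inverse of M in the mould algebra. -/

import Mathlib

/-!
Expanding `(M × M̃)^n = ∑_{n = a b} (-1)^|b| M^a M^{b̃}` and using symmetrality on each product
gives `(M × M̃)^n = ∑_m c(n, m) M^m` with `c(n, m) = ∑_{n = a b} (-1)^|b| sh^{a,b̃}_m`.
Splitting off the first letter of `m` yields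
`c(n, z m) = [n₁ = z] c(n₂⋯n_r, m) - [n_r = z] c(n₁⋯n_{r-1}, m)`; the two terms cancel for
`r = 1`, so induction on `m` gives `c(n, m) = 0` for every nonempty `n`.
Since `M̃^∅ = 1`, the mould `M̃` has a right inverse, which by associativity must be `M`.
-/

open scoped Classical

/-- Shuffle coefficient: the number of ways the word `n` can be obtained by interleaving
the letters of `a` and `b` while preserving their internal orders. -/
noncomputable def sh {𝒩 : Type*} : List 𝒩 → List 𝒩 → List 𝒩 → ℕ
  | [], b, n => if b = n then 1 else 0
  | a, [], n => if a = n then 1 else 0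
  | _ :: _, _ :: _, [] => 0
  | x :: a, y :: b, z :: n =>
      (if x = z then sh a (y :: b) n else 0) + (if y = z then sh (x :: a) b n else 0)

/-- Mould multiplication: `(M × N)^n = ∑_{n = a b} M^a N^b`. -/
noncomputable def mmul {𝒩 A : Type*} [Semiring A] (M N : List 𝒩 → A) : List 𝒩 → A :=
  fun n => ∑ i ∈ Finset.range (n.length + 1), M (n.take i) * N (n.drop i)

/-- The unit mould `𝟙`. -/
noncomputable def munit {𝒩 A : Type*} [Semiring A] : List 𝒩 → A :=
  fun n => if n = [] then 1 else 0

/-- Powers of a mould for mould multiplication. -/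
noncomputable def mpow {𝒩 A : Type*} [Semiring A] (M : List 𝒩 → A) : ℕ → (List 𝒩 → A)
  | 0 => munit
  | j + 1 => mmul M (mpow M j)

/-- A mould `M` is symmetral if `M^∅ = 1` and
`∑_n sh^{a,b}_n M^n = M^a M^b` for all nonempty words `a`, `b`. -/
def Symmetral {𝒩 A : Type*} [CommSemiring A] (M : List 𝒩 → A) : Prop :=
  M [] = 1 ∧ ∀ a b : List 𝒩, a ≠ [] → b ≠ [] →
    (∑ᶠ n : List 𝒩, (sh a b n : A) * M n) = M a * M b

/-- A mould `M` is alternal if `M^∅ = 0` and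
`∑_n sh^{a,b}_n M^n = 0` for all nonempty words `a`, `b`. -/
def Alternal {𝒩 A : Type*} [CommSemiring A] (M : List 𝒩 → A) : Prop :=
  M [] = 0 ∧ ∀ a b : List 𝒩, a ≠ [] → b ≠ [] →
    (∑ᶠ n : List 𝒩, (sh a b n : A) * M n) = 0

open Finset

section Shuffle

variable {𝒩 : Type*}

@[simp]
lemma sh_nil_left (b m : List 𝒩) : sh [] b m = if b = m then 1 else 0 := by
  cases b <;> simp [sh]

@[simp]
lemma sh_nil_right (a m : List 𝒩) : sh a [] m = if a = m then 1 else 0 := by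
  cases a <;> simp [sh]

lemma sh_apply_nil (a b : List 𝒩) : sh a b [] = if a = [] ∧ b = [] then 1 else 0 := by
  cases a <;> cases b <;> simp [sh]

lemma sh_apply_cons (a b : List 𝒩) (z : 𝒩) (m : List 𝒩) :
    sh a b (z :: m) =
      (if a.head? = some z then sh a.tail b m else 0) +
        (if b.head? = some z then sh a b.tail m else 0) := by
  rcases a with _ | ⟨x, a⟩ <;> rcases b with _ | ⟨y, b⟩
  · simp [eq_comm]
  · by_cases y = z <;> simp_all [eq_comm]
  · by_cases x = z <;> simp_all [eq_comm]
  · simp [sh]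

lemma perm_of_sh_ne_zero {a b m : List 𝒩} (h : sh a b m ≠ 0) : m.Perm (a ++ b) := by
  induction m generalizing a b with
  | nil =>
    rw [sh_apply_nil] at h
    aesop
  | cons z m ih =>
    rw [sh_apply_cons] at h
    by_cases ha : a.head? = some z ∧ sh a.tail b m ≠ 0
    · obtain ⟨ha, hsh⟩ := ha
      rw [List.eq_cons_of_mem_head? ha, List.cons_append]
      exact (ih hsh).cons z
    · have ⟨hb, hsh⟩ : b.head? = some z ∧ sh a b.tail m ≠ 0 := by
        by_contra hb
        simp_all
      rw [List.eq_cons_of_mem_head? hb]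
      exact ((ih hsh).cons z).trans List.perm_middle.symm

lemma hasFiniteSupport_sh_mul {A : Type*} [Semiring A] (a b : List 𝒩) (f : List 𝒩 → A) :
    Function.HasFiniteSupport fun m => (sh a b m : A) * f m := by
  refine (a ++ b).permutations.toFinset.finite_toSet.subset fun m hm => ?_
  have hsh : sh a b m ≠ 0 := fun h => hm (by simp [h])
  simpa [List.mem_permutations] using perm_of_sh_ne_zero hsh

/-- The coefficient of `m` in `∑_{n = a b} a ⧢ S(b)`, where `S(b) = (-1)^|b| b̃` is the antipode of
the shuffle Hopf algebra. -/
noncomputable def shAntipodeCoeff (n m : List 𝒩) : ℤ :=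
  ∑ i ∈ range (n.length + 1), (-1) ^ (n.drop i).length * (sh (n.take i) (n.drop i).reverse m : ℤ)

lemma sum_sh_head_eq (n : List 𝒩) (z : 𝒩) (m : List 𝒩) :
    ∑ i ∈ range (n.length + 1), (-1) ^ (n.drop i).length *
        (if (n.take i).head? = some z then (sh (n.take i).tail (n.drop i).reverse m : ℤ) else 0) =
      if n.head? = some z then shAntipodeCoeff n.tail m else 0 := by
  rcases n with _ | ⟨x, t⟩
  · simp
  · rw [List.length_cons, sum_range_succ']
    by_cases hx : x = z <;> simp [hx, shAntipodeCoeff]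

lemma sum_sh_getLast_eq (n : List 𝒩) (z : 𝒩) (m : List 𝒩) :
    ∑ i ∈ range (n.length + 1), (-1) ^ (n.drop i).length *
        (if (n.drop i).reverse.head? = some z then
          (sh (n.take i) (n.drop i).reverse.tail m : ℤ) else 0) =
      -if n.getLast? = some z then shAntipodeCoeff n.dropLast m else 0 := by
  rcases n.eq_nil_or_concat' with rfl | ⟨u, y, rfl⟩
  · simp
  · have hsplit : ∀ i ∈ range (u.length + 1),
        (u ++ [y]).take i = u.take i ∧ (u ++ [y]).drop i = u.drop i ++ [y] := fun i hi =>
      ⟨List.take_append_of_le_length (by simpa [Nat.lt_succ_iff] using hi),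
        List.drop_append_of_le_length (by simpa [Nat.lt_succ_iff] using hi)⟩
    have htop : (u ++ [y]).drop (u.length + 1) = [] := List.drop_eq_nil_of_le (by simp)
    rw [show (u ++ [y]).length = u.length + 1 by simp, sum_range_succ, htop]
    simp only [List.getLast?_concat, List.dropLast_concat, Option.some_inj, List.reverse_nil,
      List.head?_nil, reduceCtorEq, if_false, mul_zero, add_zero]
    by_cases hy : y = z
    · rw [if_pos hy, shAntipodeCoeff, ← sum_neg_distrib]
      refine sum_congr rfl fun i hi => ?_
      rw [(hsplit i hi).1, (hsplit i hi).2]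
      simp [hy, pow_succ]
    · rw [if_neg hy, neg_zero]
      exact sum_eq_zero fun i hi => by simp [(hsplit i hi).2, hy]

lemma shAntipodeCoeff_cons_right (n : List 𝒩) (z : 𝒩) (m : List 𝒩) :
    shAntipodeCoeff n (z :: m) =
      (if n.head? = some z then shAntipodeCoeff n.tail m else 0) -
        if n.getLast? = some z then shAntipodeCoeff n.dropLast m else 0 := by
  rw [sub_eq_add_neg, ← sum_sh_head_eq, ← sum_sh_getLast_eq, ← sum_add_distrib, shAntipodeCoeff]
  refine sum_congr rfl fun i _ => ?_
  rw [sh_apply_cons]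
  push_cast [Nat.cast_ite]
  ring

theorem shAntipodeCoeff_eq_zero {n : List 𝒩} (hn : n ≠ []) (m : List 𝒩) :
    shAntipodeCoeff n m = 0 := by
  induction m generalizing n with
  | nil =>
    refine sum_eq_zero fun i _ => ?_
    have : ¬(n.take i = [] ∧ (n.drop i).reverse = []) := fun ⟨htake, hdrop⟩ =>
      hn (by rw [← List.take_append_drop i n, htake, List.reverse_eq_nil_iff.1 hdrop]; rfl)
    rw [sh_apply_nil, if_neg this, Nat.cast_zero, mul_zero]
  | cons z m ih =>
    rw [shAntipodeCoeff_cons_right]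
    rcases n with _ | ⟨x, _ | ⟨x', t⟩⟩
    · contradiction
    · simp
    · rw [ih (by simp), ih (by simp)]
      simp

end Shuffle

section MouldAlgebra

variable {𝒩 A : Type*}

lemma munit_mmul [Semiring A] (M : List 𝒩 → A) : mmul munit M = M := by
  funext n
  rw [mmul, sum_eq_single_of_mem 0 (by simp)]
  · simp [munit]
  · intro i hi hi0
    have : n.take i ≠ [] := by
      rw [mem_range] at hi
      simpa [List.take_eq_nil_iff, hi0] using List.ne_nil_of_length_pos (by omega)
    simp [munit, this]

lemma mmul_munit [Semiring A] (M : List 𝒩 → A) : mmul M munit = M := by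
  funext n
  rw [mmul, sum_eq_single_of_mem n.length (by simp)]
  · simp [munit]
  · intro i hi hin
    have : n.drop i ≠ [] := by
      rw [mem_range] at hi
      simp only [ne_eq, List.drop_eq_nil_iff, not_le]
      omega
    simp [munit, this]

lemma mmul_assoc [Semiring A] (M N P : List 𝒩 → A) :
    mmul (mmul M N) P = mmul M (mmul N P) := by
  funext n
  have hleft : ∀ j ∈ range (n.length + 1), mmul M N (n.take j) * P (n.drop j) =
      ∑ i ∈ Ico 0 (j + 1), M (n.take i) * (N ((n.drop i).take (j - i)) * P (n.drop j)) := by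
    intro j hj
    rw [mem_range, Nat.lt_succ_iff] at hj
    rw [mmul, sum_mul, ← range_eq_Ico, List.length_take, min_eq_left hj]
    refine sum_congr rfl fun i hi => ?_
    rw [mem_range, Nat.lt_succ_iff] at hi
    rw [List.take_take, min_eq_left hi, List.drop_take, mul_assoc]
  rw [mmul, mmul, sum_congr rfl hleft, range_eq_Ico, ← sum_Ico_Ico_comm]
  refine sum_congr rfl fun i hi => ?_
  rw [mem_Ico] at hi
  rw [mmul, mul_sum, List.length_drop, sum_Ico_eq_sum_range,
    show n.length + 1 - i = n.length - i + 1 by omega]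
  refine sum_congr rfl fun l _ => ?_
  rw [Nat.add_sub_cancel_left, List.drop_drop]

noncomputable def rightInv [Ring A] (M : List 𝒩 → A) : List 𝒩 → A
  | [] => 1
  | x :: t => -∑ i ∈ range (t.length + 1), M (x :: t.take i) * rightInv M (t.drop i)
  termination_by n => n.length
  decreasing_by simp only [List.length_cons, List.length_drop]; omega

lemma mmul_rightInv [Ring A] {M : List 𝒩 → A} (hM : M [] = 1) : mmul M (rightInv M) = munit := by
  funext n
  rcases n with _ | ⟨x, t⟩
  · simp [mmul, munit, rightInv, hM]
  · rw [mmul, munit, if_neg (List.cons_ne_nil x t), List.length_cons, sum_range_succ']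
    simp only [List.take_succ_cons, List.drop_succ_cons, List.take_zero, List.drop_zero, hM,
      one_mul]
    rw [rightInv, add_neg_cancel]

lemma mmul_eq_munit_symm [Ring A] {M N : List 𝒩 → A} (hN : N [] = 1) (h : mmul M N = munit) :
    mmul N M = munit := by
  have hR := mmul_rightInv hN
  have hM : M = rightInv N := calc
    M = mmul M (mmul N (rightInv N)) := by rw [hR, mmul_munit]
    _ = mmul (mmul M N) (rightInv N) := (mmul_assoc _ _ _).symm
    _ = rightInv N := by rw [h, munit_mmul]
  rwa [hM]

end MouldAlgebra

namespace Symmetral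

variable {𝒩 A : Type*}

lemma mul_eq_finsum [CommSemiring A] {M : List 𝒩 → A} (hM : Symmetral M) (a b : List 𝒩) :
    M a * M b = ∑ᶠ m, (sh a b m : A) * M m := by
  rcases eq_or_ne a [] with rfl | ha
  · rw [hM.1, one_mul, finsum_eq_single _ b fun m hm => by simp [Ne.symm hm]]
    simp
  rcases eq_or_ne b [] with rfl | hb
  · rw [hM.1, mul_one, finsum_eq_single _ a fun m hm => by simp [Ne.symm hm]]
    simp
  exact (hM.2 a b ha hb).symm

lemma mmul_antipode_apply_eq_finsum [CommRing A] {M : List 𝒩 → A} (hM : Symmetral M)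
    (n : List 𝒩) :
    mmul M (fun l => (-1) ^ l.length * M l.reverse) n =
      ∑ᶠ m, (shAntipodeCoeff n m : A) * M m := calc
  _ = ∑ i ∈ range (n.length + 1), ∑ᶠ m,
        (-1) ^ (n.drop i).length * ((sh (n.take i) (n.drop i).reverse m : A) * M m) := by
    refine sum_congr rfl fun i _ => ?_
    rw [mul_left_comm, hM.mul_eq_finsum, mul_finsum' _ _ (hasFiniteSupport_sh_mul _ _ _)]
  _ = ∑ᶠ m, (shAntipodeCoeff n m : A) * M m := by
    rw [sum_finsum_comm _ _ fun i _ =>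
      Function.HasFiniteSupport.fun_mul_right _ (hasFiniteSupport_sh_mul _ _ M)]
    simp only [shAntipodeCoeff, Int.cast_sum, sum_mul]
    push_cast
    simp only [mul_assoc]

theorem mmul_antipode [CommRing A] {M : List 𝒩 → A} (hM : Symmetral M) :
    mmul M (fun l => (-1) ^ l.length * M l.reverse) = munit := by
  funext n
  rcases eq_or_ne n [] with rfl | hn
  · simp [mmul, munit, hM.1]
  · simp [hM.mmul_antipode_apply_eq_finsum, munit, hn, shAntipodeCoeff_eq_zero hn]

end Symmetral

theorem symmetral_inverse_antipode_general
    {𝒩 k : Type*} [CommRing k]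
    (M : List 𝒩 → k) (hM : Symmetral M)
    (Mt : List 𝒩 → k)
    (hMt : Mt = fun n => if n = [] then 1 else (-1 : k) ^ n.length * M n.reverse) :
    mmul M Mt = munit ∧ mmul Mt M = munit := by
  have hMt' : Mt = fun l => (-1) ^ l.length * M l.reverse := by
    funext l
    rcases eq_or_ne l [] with rfl | hl
    · simp [hMt, hM.1]
    · simp [hMt, hl]
  have hright : mmul M Mt = munit := hMt' ▸ hM.mmul_antipode
  exact ⟨hright, mmul_eq_munit_symm (by simp [hMt]) hright⟩

/-- for a symmetral mould `M`, the mould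
`M̃^∅ = 1`, `M̃^{n₁⋯n_r} = (−1)^r M^{n_r⋯n₁}` is its multiplicative inverse. -/
theorem symmetral_inverse_antipode
    {𝒩 k : Type*} [Nonempty 𝒩] [CommRing k]
    (M : List 𝒩 → k) (hM : Symmetral M)
    (Mt : List 𝒩 → k)
    (hMt : Mt = fun n => if n = [] then 1 else (-1 : k) ^ n.length * M n.reverse) :
    mmul M Mt = munit ∧ mmul Mt M = munit :=
  symmetral_inverse_antipode_general M hM Mt hMt
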